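/- arXiv:math/0412284 — 3 statements merged into one kernel-verified Lean document; each statement's English description precedes it below -/
import Mathlib

section
/- Let k be a field of characteristic ≠ 2 and O = k[[T₁,T₂]] with maximal ideal m. For any integer p ≥ 3, sup over t ∈ O of ord(T₁² + T₂^p − t²) equals p; equivalently, for every t ∈ O one has T₁² + T₂^p − t² ∉ m^{p+1}, while there exists t ∈ O (namely t = T₁) with T₁² + T₂^p − t² ∈ m^p. -/
/-!
Regard `k⟦T₁, T₂⟧` as `A⟦T₁⟧` with `A = k⟦T₂⟧` and write `t = a + b T₁ + c T₁² + ⋯`.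
If `T₁² + T₂^p − t² ∈ m^(p+1)`, its `T₁^n`-coefficient is divisible by `T₂^(p+1-n)`; for
`n = 0, 1, 2` this says `T₂^(p+1) ∣ T₂^p − a²`, `T₂^p ∣ 2ab` and `b² + 2ac ≡ 1 mod T₂`.
The first forces `a(0) = 0`, so `b` is a unit by the third, and since `2` is a unit the second
gives `T₂^p ∣ a`. Then `T₂^(p+1) ∣ a²`, hence `T₂^(p+1) ∣ T₂^p`, which is absurd.
-/

open IsLocalRing

namespace MvPowerSeries

theorem X_ne_zero {σ R : Type*} [Semiring R] [Nontrivial R] (s : σ) :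
    (X s : MvPowerSeries σ R) ≠ 0 := fun h =>
  one_ne_zero (α := R) (by simpa using congrArg (coeff (Finsupp.single s 1)) h)

variable {σ k : Type*} [Field k]

theorem mem_maximalIdeal_iff_constantCoeff_eq_zero {f : MvPowerSeries σ k} :
    f ∈ maximalIdeal (MvPowerSeries σ k) ↔ constantCoeff f = 0 := by
  rw [mem_maximalIdeal, mem_nonunits_iff, isUnit_iff_constantCoeff, isUnit_iff_ne_zero, not_not]

theorem X_mem_maximalIdeal (s : σ) : X s ∈ maximalIdeal (MvPowerSeries σ k) :=
  mem_maximalIdeal_iff_constantCoeff_eq_zero.mpr (constantCoeff_X s)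

theorem le_order_of_mem_maximalIdeal_pow {n : ℕ} {f : MvPowerSeries σ k}
    (hf : f ∈ maximalIdeal (MvPowerSeries σ k) ^ n) : (n : ℕ∞) ≤ f.order := by
  induction n generalizing f with
  | zero => simp
  | succ n ih =>
    rw [pow_succ] at hf
    refine Submodule.mul_induction_on hf (fun a ha b hb => ?_) fun f g hf hg => ?_
    · have hb : 1 ≤ b.order := one_le_order_iff_constCoeff_eq_zero.mpr
        (mem_maximalIdeal_iff_constantCoeff_eq_zero.mp hb)
      push_cast
      exact (add_le_add (ih ha) hb).trans le_order_mul
    · exact (le_min hf hg).trans min_order_le_add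

theorem X_pow_dvd_coeff_finSuccEquiv {R : Type*} [CommSemiring R] {N : ℕ}
    {F : MvPowerSeries (Fin 2) R} (hF : (N : ℕ∞) ≤ F.order) (n : ℕ) :
    (X 0 : MvPowerSeries (Fin 1) R) ^ (N - n) ∣ PowerSeries.coeff n (finSuccEquiv R 1 F) := by
  refine X_pow_dvd_iff.mpr fun d hd => ?_
  rw [coeff_coeff_finSuccEquiv]
  refine coeff_of_lt_order (lt_of_lt_of_le ?_ hF)
  simp only [Finsupp.degree_eq_sum, Fin.sum_univ_succ, Finsupp.cons_zero, Finsupp.cons_succ,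
    Finset.univ_eq_empty, Finset.sum_empty, add_zero]
  exact_mod_cast (by omega : n + d 0 < N)

end MvPowerSeries

namespace PowerSeries

variable {R : Type*} [CommRing R]

theorem coeff_one_sq (T : R⟦X⟧) : coeff 1 (T ^ 2) = 2 * coeff 0 T * coeff 1 T := by
  rw [sq, coeff_mul, Finset.Nat.sum_antidiagonal_succ, Finset.Nat.antidiagonal_zero,
    Finset.sum_singleton]
  ring

theorem coeff_two_sq (T : R⟦X⟧) :
    coeff 2 (T ^ 2) = coeff 1 T ^ 2 + 2 * coeff 0 T * coeff 2 T := by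
  rw [sq, coeff_mul, Finset.Nat.sum_antidiagonal_succ, Finset.Nat.sum_antidiagonal_succ,
    Finset.Nat.antidiagonal_zero, Finset.sum_singleton]
  ring

theorem not_forall_pow_dvd_coeff_X_sq_add_C_pow_sub_sq {A : Type*} [CommRing A] [IsLocalRing A]
    [IsCancelMulZero A] (htwo : IsUnit (2 : A)) {y : A} (hy0 : y ≠ 0) (hy : y ∈ maximalIdeal A)
    {p : ℕ} (hp : 2 ≤ p) (T : A⟦X⟧) :
    ¬ ∀ n, y ^ (p + 1 - n) ∣ coeff n (X ^ 2 + C (y ^ p) - T ^ 2) := by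
  intro h
  have hcoeff0 : y ^ (p + 1) ∣ y ^ p - coeff 0 T ^ 2 := by
    simpa [sq, coeff_X_pow, coeff_C, -map_pow] using h 0
  have hcoeff1 : y ^ p ∣ 2 * coeff 0 T * coeff 1 T := by
    simpa [coeff_one_sq, coeff_X_pow, coeff_C, -map_pow] using h 1
  have hcoeff2 : y ^ (p - 1) ∣ 1 - (coeff 1 T ^ 2 + 2 * coeff 0 T * coeff 2 T) := by
    simpa [coeff_two_sq, coeff_X_pow, coeff_C, -map_pow] using h 2
  have pow_mem {n : ℕ} (hn : n ≠ 0) : y ^ n ∈ maximalIdeal A :=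
    Ideal.pow_mem_of_mem _ hy n (Nat.pos_of_ne_zero hn)
  have ha : coeff 0 T ∈ maximalIdeal A := by
    refine (maximalIdeal.isMaximal A).isPrime.mem_of_pow_mem 2 ?_
    rw [← sub_sub_cancel (y ^ p) (coeff 0 T ^ 2)]
    exact sub_mem (pow_mem (by omega)) (Ideal.mem_of_dvd _ hcoeff0 (pow_mem (by omega)))
  have hb : IsUnit (coeff 1 T) := by
    refine notMem_maximalIdeal.mp fun hb => notMem_maximalIdeal.mpr (isUnit_one (M := A)) ?_
    rw [← sub_add_cancel 1 (coeff 1 T ^ 2 + 2 * coeff 0 T * coeff 2 T)]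
    refine add_mem (Ideal.mem_of_dvd _ hcoeff2 (pow_mem (by omega))) (add_mem ?_ ?_)
    · exact Ideal.pow_mem_of_mem _ hb 2 two_pos
    · exact Ideal.mul_mem_right _ _ (Ideal.mul_mem_left _ _ ha)
  have hya : y ^ p ∣ coeff 0 T := by
    rwa [mul_right_comm, mul_comm, (htwo.mul hb).dvd_mul_right] at hcoeff1
  have hya2 : y ^ (p + 1) ∣ coeff 0 T ^ 2 :=
    (pow_dvd_pow y (by omega)).trans ((pow_mul y p 2).symm ▸ pow_dvd_pow_of_dvd hya 2)
  have hyy : y ^ (p + 1) ∣ y ^ p := by simpa using dvd_add hcoeff0 hya2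
  have hy1 : ¬ IsUnit y := (mem_maximalIdeal y).mp hy
  exact absurd ((pow_dvd_pow_iff hy0 hy1).mp hyy) (by omega)

end PowerSeries

open MvPowerSeries

/-- `sup_t ord(T₁² + T₂^p − t²) = p` : for every `t` the element `T₁²+T₂^p−t²` is not in
`m^(p+1)`, and for some `t` (namely `t = T₁`) it lies in `m^p`. -/
theorem sup_ord_dist_to_squares
    {k : Type*} [Field k] (hk : ringChar k ≠ 2) (p : ℕ) (hp : 3 ≤ p) :
    (∀ t : MvPowerSeries (Fin 2) k,
      (MvPowerSeries.X 0) ^ 2 + (MvPowerSeries.X 1) ^ p - t ^ 2 ∉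
        (IsLocalRing.maximalIdeal (MvPowerSeries (Fin 2) k)) ^ (p + 1)) ∧
    (∃ t : MvPowerSeries (Fin 2) k,
      (MvPowerSeries.X 0) ^ 2 + (MvPowerSeries.X 1) ^ p - t ^ 2 ∈
        (IsLocalRing.maximalIdeal (MvPowerSeries (Fin 2) k)) ^ p) := by
  refine ⟨fun t ht => ?_, X 0, ?_⟩
  · have htwo : IsUnit (2 : MvPowerSeries (Fin 1) k) := by
      rw [isUnit_iff_constantCoeff, map_ofNat]
      exact (Ring.two_ne_zero hk).isUnit
    refine PowerSeries.not_forall_pow_dvd_coeff_X_sq_add_C_pow_sub_sq htwo (X_ne_zero 0)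
      (X_mem_maximalIdeal 0) (p := p) (by omega) (finSuccEquiv k 1 t) fun n => ?_
    have hX1 : finSuccEquiv k 1 (X 1) = PowerSeries.C (X 0) := finSuccEquiv_X_succ 0
    simpa [hX1] using X_pow_dvd_coeff_finSuccEquiv (le_order_of_mem_maximalIdeal_pow ht) n
  · rw [add_sub_cancel_left]
    exact Ideal.pow_mem_pow (X_mem_maximalIdeal 1) p
end

section
/- Let k be a field of characteristic ≠ 2, O = k[[T₁,T₂]] with maximal ideal m, and let p ≥ 3, k ≥ 3 be integers. With a_n = (−1)^{n−1}(2n−2)!/(2^{2n−1}(n−1)!n!) for n ≥ 1, a₀ = 1, set u_{p,k} = T₁^{2k−2} Σ_{i=0}^{k−1} a_i T₂^{ip} / T₁^{2i} (an element of O since ip ≥ 2i) and v_k = T₁^{2k−3}. Then u_{p,k}² − (T₁² + T₂^p)·v_k² ∈ m^{(p+2)k−4}. -/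
/-!
Put `Y = T₁²`, `Z = T₂^p`, so that `u_{p,k} = Σ_{i<k} a_i Y^{k-1-i} Z^i` is the homogenised
truncation below degree `k` of `√(1 + x) = Σ a_i x^i`. Since `(√(1 + x))² = 1 + x`, the Cauchy
products `Σ_{i+j=n} a_i a_j` vanish for `n ≥ 2` (this is the Catalan recursion), so in `u²` the
terms with `i + j < k` add up to `Y^{2k-2} + Y^{2k-3} Z = (T₁² + T₂^p) v_k²`. Each remaining term
`Y^{2k-2-n} Z^n` with `n ≥ k` has order `4k - 4 + (p - 2) n ≥ (p + 2) k - 4`.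
-/

/-- Coefficients of the binomial series for `(1+u)^{1/2}`:
`a₀ = 1`, `a_n = (−1)^{n−1}(2n−2)!/(2^{2n−1}(n−1)!n!) = (−1)^{n−1} catalan(n−1)/2^{2n−1}`. -/
noncomputable def binomHalfCoef (k : Type*) [Field k] : ℕ → k
  | 0 => 1
  | n + 1 => (-1) ^ n * (catalan n : k) * ((2 : k) ^ (2 * n + 1))⁻¹

/-- `u_{p,k} = T₁^{2k−2} Σ_{i=0}^{k−1} a_i T₂^{ip}/T₁^{2i} ∈ k[[T₁,T₂]]`. -/
noncomputable def upk (k : Type*) [Field k] (p kk : ℕ) : MvPowerSeries (Fin 2) k :=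
  ∑ i ∈ Finset.range kk,
    MvPowerSeries.C (σ := Fin 2) (R := k) (binomHalfCoef k i) *
      (MvPowerSeries.X 0) ^ (2 * kk - 2 - 2 * i) * (MvPowerSeries.X 1) ^ (i * p)

open Finset

theorem sum_antidiagonal_binomHalfCoef_mul {K : Type*} [Field K] (h2 : (2 : K) ≠ 0) (n : ℕ) :
    ∑ ij ∈ antidiagonal n, binomHalfCoef K ij.1 * binomHalfCoef K ij.2 =
      if n ≤ 1 then 1 else 0 := by
  match n with
  | 0 => simp [binomHalfCoef]
  | 1 =>
    norm_num [Nat.sum_antidiagonal_succ, binomHalfCoef]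
    rw [← two_mul, mul_inv_cancel₀ h2]
  | n + 2 =>
    have inner : ∀ ij ∈ antidiagonal n,
        binomHalfCoef K (ij.1 + 1) * binomHalfCoef K (ij.2 + 1) =
          (-1) ^ n * ((2 : K) ^ (2 * n + 2))⁻¹ * (catalan ij.1 * catalan ij.2 : ℕ) := by
      rintro ⟨i, j⟩ hij
      rw [HasAntidiagonal.mem_antidiagonal] at hij
      subst hij
      simp only [binomHalfCoef]
      push_cast
      field_simp
      ring
    rw [Nat.sum_antidiagonal_succ, Nat.sum_antidiagonal_succ', sum_congr rfl inner, ← mul_sum,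
      ← Nat.cast_sum, ← catalan_succ']
    simp only [binomHalfCoef, if_neg (by omega : ¬ n + 2 ≤ 1)]
    rw [show 2 * (n + 1) + 1 = (2 * n + 2) + 1 by ring, pow_succ]
    field_simp
    ring

section

variable {R : Type*} [CommRing R]

theorem sq_sum_sub_eq_sum_filter_le (c : ℕ → R)
    (hc : ∀ n, ∑ ij ∈ antidiagonal n, c ij.1 * c ij.2 = if n ≤ 1 then 1 else 0)
    {N : ℕ} (hN : 2 ≤ N) (Y Z : R) :
    (∑ i ∈ range N, c i * Y ^ (N - 1 - i) * Z ^ i) ^ 2 - (Y + Z) * Y ^ (2 * N - 3) =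
      ∑ ij ∈ (range N ×ˢ range N).filter (fun ij => N ≤ ij.1 + ij.2),
        c ij.1 * c ij.2 * Y ^ (2 * N - 2 - (ij.1 + ij.2)) * Z ^ (ij.1 + ij.2) := by
  set f : ℕ × ℕ → R := fun ij =>
    c ij.1 * c ij.2 * Y ^ (2 * N - 2 - (ij.1 + ij.2)) * Z ^ (ij.1 + ij.2)
  have expand : (∑ i ∈ range N, c i * Y ^ (N - 1 - i) * Z ^ i) ^ 2 =
      ∑ ij ∈ range N ×ˢ range N, f ij := by
    rw [sq, sum_mul_sum, sum_product]
    refine sum_congr rfl fun i hi => sum_congr rfl fun j hj => ?_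
    rw [mem_range] at hi hj
    simp only [f]
    rw [show 2 * N - 2 - (i + j) = (N - 1 - i) + (N - 1 - j) by omega, pow_add, pow_add]
    ring
  have fiber : ∀ n ∈ range N,
      ∑ ij ∈ ((range N ×ˢ range N).filter (fun ij => ¬ N ≤ ij.1 + ij.2)).filter
        (fun ij => ij.1 + ij.2 = n), f ij =
        if n ≤ 1 then Y ^ (2 * N - 2 - n) * Z ^ n else 0 := by
    intro n hn
    rw [mem_range] at hn
    have : ((range N ×ˢ range N).filter (fun ij => ¬ N ≤ ij.1 + ij.2)).filter
        (fun ij => ij.1 + ij.2 = n) = antidiagonal n := by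
      ext ⟨i, j⟩
      simp only [mem_filter, mem_product, mem_range, HasAntidiagonal.mem_antidiagonal]
      omega
    rw [this]
    calc ∑ ij ∈ antidiagonal n, f ij
        = (∑ ij ∈ antidiagonal n, c ij.1 * c ij.2) * (Y ^ (2 * N - 2 - n) * Z ^ n) := by
          rw [sum_mul]
          refine sum_congr rfl fun ij hij => ?_
          rw [HasAntidiagonal.mem_antidiagonal] at hij
          simp only [f, hij]
          ring
      _ = _ := by rw [hc, ite_mul, one_mul, zero_mul]
  have low : ∑ ij ∈ (range N ×ˢ range N).filter (fun ij => ¬ N ≤ ij.1 + ij.2), f ij =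
      (Y + Z) * Y ^ (2 * N - 3) := by
    have two : (range N).filter (· ≤ 1) = range 2 := by
      ext
      simp only [mem_filter, mem_range]
      omega
    rw [← sum_fiberwise_of_maps_to (g := fun ij => ij.1 + ij.2) (t := range N)
      (fun ij hij => by simp only [mem_filter, mem_range] at hij ⊢; omega), sum_congr rfl fiber,
      ← sum_filter, two, sum_range_succ, sum_range_one,
      show 2 * N - 2 - 0 = (2 * N - 3) + 1 by omega, show 2 * N - 2 - 1 = 2 * N - 3 by omega]
    ring
  rw [expand, ← sum_filter_add_sum_filter_not _ (fun ij => N ≤ ij.1 + ij.2), low,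
    add_sub_cancel_right]

theorem pow_mul_pow_mem_pow {I : Ideal R} {Y Z : R} {a b : ℕ} (hY : Y ∈ I ^ a) (hZ : Z ∈ I ^ b)
    (m n : ℕ) : Y ^ m * Z ^ n ∈ I ^ (a * m + b * n) := by
  rw [pow_add, pow_mul, pow_mul]
  exact Ideal.mul_mem_mul (Ideal.pow_mem_pow hY m) (Ideal.pow_mem_pow hZ n)

theorem sq_sum_sub_mem_pow (c : ℕ → R)
    (hc : ∀ n, ∑ ij ∈ antidiagonal n, c ij.1 * c ij.2 = if n ≤ 1 then 1 else 0)
    {N : ℕ} (hN : 2 ≤ N) {I : Ideal R} {Y Z : R} {a b : ℕ} (hab : a ≤ b)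
    (hY : Y ∈ I ^ a) (hZ : Z ∈ I ^ b) :
    (∑ i ∈ range N, c i * Y ^ (N - 1 - i) * Z ^ i) ^ 2 - (Y + Z) * Y ^ (2 * N - 3) ∈
      I ^ (a * (2 * N - 2) + (b - a) * N) := by
  rw [sq_sum_sub_eq_sum_filter_le c hc hN]
  refine Ideal.sum_mem _ fun ij hij => ?_
  simp only [mem_filter, mem_product, mem_range] at hij
  set n := ij.1 + ij.2
  have hdeg : a * (2 * N - 2) + (b - a) * N ≤ a * (2 * N - 2 - n) + b * n :=
    calc a * (2 * N - 2) + (b - a) * N ≤ a * (2 * N - 2) + (b - a) * n := by gcongr; exact hij.2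
      _ = a * (2 * N - 2 - n) + (a * n + (b - a) * n) := by
        rw [← add_assoc, ← mul_add, Nat.sub_add_cancel (by omega)]
      _ = a * (2 * N - 2 - n) + b * n := by rw [← add_mul, Nat.add_sub_cancel' hab]
  rw [mul_assoc]
  exact Ideal.mul_mem_left _ _ (Ideal.pow_le_pow_right hdeg (pow_mul_pow_mem_pow hY hZ _ _))

end

theorem MvPowerSeries.X_mem_maximalIdeal_s4 {σ K : Type*} [Field K] (s : σ) :
    (X s : MvPowerSeries σ K) ∈ IsLocalRing.maximalIdeal (MvPowerSeries σ K) := by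
  rw [IsLocalRing.mem_maximalIdeal, mem_nonunits_iff, isUnit_iff_constantCoeff, constantCoeff_X]
  exact not_isUnit_zero

/-- With `v_k = T₁^{2k−3}`, one has `u_{p,k}² − (T₁²+T₂^p)·v_k² ∈ m^{(p+2)k−4}`. -/
theorem approx_solution_order
    {k : Type*} [Field k] (hk : ringChar k ≠ 2) (p kk : ℕ) (hp : 3 ≤ p) (hkk : 3 ≤ kk) :
    (upk k p kk) ^ 2 -
        ((MvPowerSeries.X 0) ^ 2 + (MvPowerSeries.X 1) ^ p) *
          ((MvPowerSeries.X 0) ^ (2 * kk - 3)) ^ 2 ∈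
      (IsLocalRing.maximalIdeal (MvPowerSeries (Fin 2) k)) ^ ((p + 2) * kk - 4) := by
  have hu : upk k p kk = ∑ i ∈ range kk, MvPowerSeries.C (binomHalfCoef k i) *
      (MvPowerSeries.X 0 ^ 2) ^ (kk - 1 - i) * (MvPowerSeries.X 1 ^ p) ^ i := by
    refine sum_congr rfl fun i _ => ?_
    rw [← pow_mul, ← pow_mul, mul_comm p, show 2 * (kk - 1 - i) = 2 * kk - 2 - 2 * i by omega]
  have hv : (MvPowerSeries.X 0 ^ (2 * kk - 3)) ^ 2 =
      (MvPowerSeries.X 0 ^ 2 : MvPowerSeries (Fin 2) k) ^ (2 * kk - 3) := by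
    rw [← pow_mul, ← pow_mul, mul_comm]
  have hc (n : ℕ) : ∑ ij ∈ antidiagonal n, MvPowerSeries.C (σ := Fin 2) (binomHalfCoef k ij.1) *
      MvPowerSeries.C (binomHalfCoef k ij.2) = if n ≤ 1 then 1 else 0 := by
    simp only [← map_mul, ← map_sum, sum_antidiagonal_binomHalfCoef_mul (Ring.two_ne_zero hk),
      apply_ite MvPowerSeries.C, map_one, map_zero]
  have hdeg : (p + 2) * kk - 4 ≤ 2 * (2 * kk - 2) + (p - 2) * kk := by
    obtain ⟨q, rfl⟩ := Nat.exists_eq_add_of_le (by omega : 2 ≤ p)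
    rw [Nat.add_sub_cancel_left]
    ring_nf
    omega
  rw [hu, hv]
  exact Ideal.pow_le_pow_right hdeg <| sq_sum_sub_mem_pow _ hc (by omega) (by omega : 2 ≤ p)
    (Ideal.pow_mem_pow (MvPowerSeries.X_mem_maximalIdeal_s4 0) 2)
    (Ideal.pow_mem_pow (MvPowerSeries.X_mem_maximalIdeal_s4 1) p)
end

section
/- Let O = k[[T₁,...,T_N]] and let Q ∈ O[X] be a polynomial of degree d with homogenization P(X,Y) = Y^d·Q(X/Y) ∈ O[X,Y]. Suppose β : ℕ → ℕ is nondecreasing, (0,0) is the only zero of P in O², and ord(P(u,v)) ≤ β(min(ord u, ord v)) for all (u,v) ≠ (0,0) in O². Let x be a root of Q in the completion V̂ of the valuation ring V of O (with respect to the order valuation), with ord(x) ≥ 0. Then for all u, v ∈ O with v ≠ 0 and ord(u) ≥ ord(v): ord(u/v − x) ≤ β(ord(v)) − d·ord(v). -/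
/-! Since `Q(x) = 0`, the homogenization satisfies `P(xv, v) = v^d Q(x) = 0`, so
`P(u, v) = P(u, v) - P(xv, v) = (u - xv) · W` where, by the geometric-sum factorization of
`u^i - (xv)^i`, the cofactor `W` is a combination of monomials of degree `d - 1` in `u`, `xv`, `v`.
When `ord u ≥ ord v` this gives `ord W ≥ (d - 1) ord v`, and the Artin-type bound
`ord P(u, v) ≤ β(ord v)` yields `ord(u - xv) + (d - 1) ord v ≤ β(ord v)`. -/

open Polynomial PowerSeries Finset

theorem PowerSeries.X_pow_dvd_iff_le_order {R : Type*} [Semiring R] {φ : R⟦X⟧} {n : ℕ} :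
    X ^ n ∣ φ ↔ (n : ℕ∞) ≤ φ.order := by
  rw [order_eq_emultiplicity_X, pow_dvd_iff_le_emultiplicity]

section CommRing

variable {S : Type*} [CommRing S]

theorem exists_pow_sub_pow_eq_sub_mul_of_dvd {a y c : S} (ha : c ∣ a) (hy : c ∣ y) (i : ℕ) :
    ∃ G, a ^ i - y ^ i = (a - y) * G ∧ c ^ (i - 1) ∣ G := by
  refine ⟨∑ j ∈ range i, a ^ j * y ^ (i - 1 - j), by rw [mul_comm, geom_sum₂_mul], ?_⟩
  refine dvd_sum fun j hj => ?_
  calc c ^ (i - 1) = c ^ j * c ^ (i - 1 - j) := by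
        rw [← pow_add, Nat.add_sub_cancel' (Nat.le_sub_one_of_lt (mem_range.mp hj))]
    _ ∣ a ^ j * y ^ (i - 1 - j) := mul_dvd_mul (pow_dvd_pow_of_dvd ha j) (pow_dvd_pow_of_dvd hy _)

theorem sum_coeff_mul_pow_mul_pow_eq_zero {R : Type*} [Semiring R] (f : R →+* S) {q : R[X]}
    {d : ℕ} (hq : q.natDegree ≤ d) {x : S} (hx : q.eval₂ f x = 0) (b : S) :
    ∑ i ∈ range (d + 1), f (q.coeff i) * (x * b) ^ i * b ^ (d - i) = 0 := by
  calc _ = (∑ i ∈ range (d + 1), f (q.coeff i) * x ^ i) * b ^ d := by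
        rw [sum_mul]
        refine sum_congr rfl fun i hi => ?_
        rw [mul_pow, ← pow_mul_pow_sub b (mem_range_succ_iff.mp hi)]
        ring
    _ = 0 := by rw [← eval₂_eq_sum_range' f (Nat.lt_succ_of_le hq), hx, zero_mul]

theorem exists_sum_coeff_mul_pow_mul_pow_eq_sub_mul {R : Type*} [Semiring R] (f : R →+* S)
    {q : R[X]} {d : ℕ} (hq : q.natDegree ≤ d) {x : S} (hx : q.eval₂ f x = 0) {a b c : S}
    (ha : c ∣ a) (hb : c ∣ b) :
    ∃ W, ∑ i ∈ range (d + 1), f (q.coeff i) * a ^ i * b ^ (d - i) = (a - x * b) * W ∧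
      c ^ (d - 1) ∣ W := by
  choose G hG hGc using fun i => exists_pow_sub_pow_eq_sub_mul_of_dvd ha (hb.mul_left x) i
  refine ⟨∑ i ∈ range (d + 1), f (q.coeff i) * G i * b ^ (d - i), ?_, dvd_sum fun i hi => ?_⟩
  · rw [← sub_zero (∑ i ∈ range (d + 1), _), ← sum_coeff_mul_pow_mul_pow_eq_zero f hq hx b,
      ← sum_sub_distrib, mul_sum]
    exact sum_congr rfl fun i _ => by linear_combination f (q.coeff i) * b ^ (d - i) * hG i
  · calc c ^ (d - 1) ∣ c ^ (i - 1) * c ^ (d - i) := by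
          rw [← pow_add]
          exact pow_dvd_pow c (by have := mem_range_succ_iff.mp hi; omega)
      _ ∣ f (q.coeff i) * G i * b ^ (d - i) := by
          rw [mul_assoc]
          exact dvd_mul_of_dvd_right (mul_dvd_mul (hGc i) (pow_dvd_pow_of_dvd hb _)) _

end CommRing

theorem diophantine_bound_of_artin_bound_general
    {k F : Type*} [Field k] [Field F] {N : ℕ}
    (ι : MvPowerSeries (Fin N) k →+* PowerSeries F)
    (Q : Polynomial (MvPowerSeries (Fin N) k)) (d : ℕ) (hd : Q.natDegree = d)
    (β : ℕ → ℕ)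
    (hbound : ∀ (u v : MvPowerSeries (Fin N) k) (n : ℕ),
      min (PowerSeries.order (ι u)) (PowerSeries.order (ι v)) = (n : ℕ∞) →
      PowerSeries.order (ι (∑ i ∈ Finset.range (d + 1), Q.coeff i * u ^ i * v ^ (d - i))) ≤
        (β n : ℕ∞))
    (x : PowerSeries F) (hx : Polynomial.eval₂ ι x Q = 0) :
    ∀ (u v : MvPowerSeries (Fin N) k) (nv : ℕ), v ≠ 0 →
      PowerSeries.order (ι v) = (nv : ℕ∞) →
      PowerSeries.order (ι v) ≤ PowerSeries.order (ι u) →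
      PowerSeries.order (ι u - x * ι v) + ((d * nv : ℕ) : ℕ∞) ≤
        ((β nv + nv : ℕ) : ℕ∞) := by
  intro u v nv _ hnv hle
  have hXv : (X : F⟦X⟧) ^ nv ∣ ι v := X_pow_dvd_iff_le_order.mpr hnv.ge
  have hXu : (X : F⟦X⟧) ^ nv ∣ ι u := X_pow_dvd_iff_le_order.mpr (hnv ▸ hle)
  obtain ⟨W, hW, hXW⟩ := exists_sum_coeff_mul_pow_mul_pow_eq_sub_mul ι hd.le hx hXu hXv
  have hP := hbound u v nv (by rw [min_eq_right hle, hnv])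
  rw [map_sum] at hP
  simp only [map_mul, map_pow, hW, order_mul] at hP
  have hWord : ((nv * (d - 1) : ℕ) : ℕ∞) ≤ W.order :=
    X_pow_dvd_iff_le_order.mp (by rwa [← pow_mul] at hXW)
  calc order (ι u - x * ι v) + ((d * nv : ℕ) : ℕ∞)
      ≤ order (ι u - x * ι v) + (nv * (d - 1) : ℕ) + nv := by
        rw [add_assoc, ← Nat.cast_add, ← Nat.mul_succ, mul_comm d]
        gcongr
        omega
    _ ≤ β nv + nv := by gcongr; exact (add_le_add_right hWord _).trans hP
    _ = ((β nv + nv : ℕ) : ℕ∞) := by push_cast; rfl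

/-- Let `O = k[[T₁,…,T_N]]`, `V̂ = F[[T]]` its "exceptional-divisor" completion, embedded by a
ring map `ι` extending the `m`-adic order (hypothesis `hι`).  Let `Q ∈ O[X]` of degree `d`
with homogenization `P(X,Y) = Σ_i Q_i X^i Y^{d−i}` whose only zero in `O²` is `(0,0)`, and let
`β` be nondecreasing with `ord(P(u,v)) ≤ β(min(ord u, ord v))` for `(u,v) ≠ (0,0)`.  If `x ∈ V̂`
is a root of `Q` (so `ord x ≥ 0`), then for all `u, v ∈ O` with `v ≠ 0` and `ord u ≥ ord v`,
`ord(u/v − x) ≤ β(ord v) − d·ord v`, i.e. `ord(ι u − x·ι v) + d·ord v ≤ β(ord v) + ord v`. -/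
theorem diophantine_bound_of_artin_bound
    {k F : Type*} [Field k] [Field F] {N : ℕ}
    (ι : MvPowerSeries (Fin N) k →+* PowerSeries F)
    (hι : ∀ (f : MvPowerSeries (Fin N) k) (n : ℕ),
      f ∈ (IsLocalRing.maximalIdeal (MvPowerSeries (Fin N) k)) ^ n ↔
        (PowerSeries.X : PowerSeries F) ^ n ∣ ι f)
    (Q : Polynomial (MvPowerSeries (Fin N) k)) (d : ℕ) (hd : Q.natDegree = d)
    (β : ℕ → ℕ) (hβ : Monotone β)
    (hzero : ∀ u v : MvPowerSeries (Fin N) k,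
      (∑ i ∈ Finset.range (d + 1), Q.coeff i * u ^ i * v ^ (d - i)) = 0 → u = 0 ∧ v = 0)
    (hbound : ∀ (u v : MvPowerSeries (Fin N) k) (n : ℕ),
      min (PowerSeries.order (ι u)) (PowerSeries.order (ι v)) = (n : ℕ∞) →
      PowerSeries.order (ι (∑ i ∈ Finset.range (d + 1), Q.coeff i * u ^ i * v ^ (d - i))) ≤
        (β n : ℕ∞))
    (x : PowerSeries F) (hx : Polynomial.eval₂ ι x Q = 0) :
    ∀ (u v : MvPowerSeries (Fin N) k) (nv : ℕ), v ≠ 0 →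
      PowerSeries.order (ι v) = (nv : ℕ∞) →
      PowerSeries.order (ι v) ≤ PowerSeries.order (ι u) →
      PowerSeries.order (ι u - x * ι v) + ((d * nv : ℕ) : ℕ∞) ≤
        ((β nv + nv : ℕ) : ℕ∞) :=
  diophantine_bound_of_artin_bound_general ι Q d hd β hbound x hx
end
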